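/- arXiv:1001.1033 — 2 statements merged into one kernel-verified Lean document; each statement's English description precedes it below -/
import Mathlib

section
/- Let 1 ≤ i_1 < i_2 < ⋯ < i_l ≤ r and let t_1, …, t_l be the target vertices of the right moves R_{i_1}, …, R_{i_l}, all computed on the original diagram D. Then t_1, …, t_l are pairwise distinct. Consequently the set (D \ {x_{i_1},…,x_{i_l}}) ∪ {t_1,…,t_l}, which is the weight diagram of the right path R_θ(D) associated with θ ∈ {0,1}^r having 1's exactly in positions i_1,…,i_l, again has exactly r elements. -/
/-- Number of elements of `D` strictly between `s` and `t`. -/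
noncomputable def crossCount (D : Finset ℤ) (s t : ℤ) : ℕ :=
  ((Finset.Ioo s t).filter (fun z => z ∈ D)).card

/-- `ℓ(s,t)`: the number of elements of `D` strictly between `s` and `t` minus the
number of integers strictly between `s` and `t` that are not in `D`. -/
noncomputable def ell (D : Finset ℤ) (s t : ℤ) : ℤ :=
  (crossCount D s t : ℤ) - (((Finset.Ioo s t).filter (fun z => z ∉ D)).card : ℤ)

/-- `t` is the target vertex of the right move `R_i` on the diagram `D`. -/
def IsRightMoveTarget (r : ℕ) (D : Finset ℤ) (x : Fin r → ℤ) (i : Fin r) (t : ℤ) : Prop :=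
  t ∉ D ∧ x i < t ∧ ell D (x i) t = 0 ∧
    ∀ s : ℤ, s ∉ D → x i < s → s < t → 0 < ell D (x i) s

/-!
Reading `ℓ(x_i, ·)` from left to right, it starts at `0` just after `x_i` and moves by `+1` over
each `×` and by `-1` over each empty vertex. Minimality of the target `t` of `R_i` keeps this walk
`≥ 0` on `(x_i, t]`. If a later `x_j < t` had the same target, then
`0 = ℓ(x_i, t) = ℓ(x_i, x_j) + 1 + ℓ(x_j, t) ≥ 1`.
-/

open Finset

section

variable (D : Finset ℤ)

theorem ell_eq_sum (a b : ℤ) : ell D a b = ∑ z ∈ Ioo a b, if z ∈ D then 1 else -1 := by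
  simp only [ell, crossCount, sum_ite, sum_const, Int.nsmul_eq_mul, mul_one]
  ring

theorem ell_eq_add {a y b : ℤ} (hay : a < y) (hyb : y < b) :
    ell D a b = ell D a y + (if y ∈ D then 1 else -1) + ell D y b := by
  have hsplit : Ioo a b = Ioo a y ∪ insert y (Ioo y b) := by
    ext z; simp only [mem_Ioo, mem_union, mem_insert]; omega
  have hdisj : Disjoint (Ioo a y) (insert y (Ioo y b)) := by
    rw [disjoint_left]; intro z; simp only [mem_Ioo, mem_insert]; omega
  simp only [ell_eq_sum, hsplit, sum_union hdisj, sum_insert (by simp : y ∉ Ioo y b)]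
  ring

theorem ell_self_add_one (a : ℤ) : ell D a (a + 1) = 0 := by
  have hempty : Ioo a (a + 1) = ∅ := by
    ext z; simp only [mem_Ioo, notMem_empty, iff_false]; omega
  simp [ell_eq_sum, hempty]

theorem ell_add_one {a s : ℤ} (has : a < s) :
    ell D a (s + 1) = ell D a s + if s ∈ D then 1 else -1 := by
  rw [ell_eq_add D has (lt_add_one s), ell_self_add_one, add_zero]

theorem ell_nonneg_of_forall_pos {a b : ℤ}
    (hpos : ∀ s, s ∉ D → a < s → s < b → 0 < ell D a s) {s : ℤ} (has : a < s) (hsb : s ≤ b) :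
    0 ≤ ell D a s := by
  induction s, (has : a + 1 ≤ s) using Int.leInduction with
  | base => rw [ell_self_add_one]
  | succ s hle ih =>
    rw [ell_add_one D (by omega)]
    split_ifs with hsD
    · linarith [ih (by omega)]
    · linarith [hpos s hsD (by omega) (by omega)]

end

theorem IsRightMoveTarget.ne_of_lt {r : ℕ} {D : Finset ℤ} {x : Fin r → ℤ} {i j : Fin r} {s u : ℤ}
    (hs : IsRightMoveTarget r D x i s) (hu : IsRightMoveTarget r D x j u) (hij : x i < x j)
    (hj : x j ∈ D) : s ≠ u := by
  rintro rfl
  obtain ⟨-, -, hs0, hspos⟩ := hs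
  obtain ⟨-, hjs, hu0, -⟩ := hu
  have hsplit := ell_eq_add D hij hjs
  have hnonneg := ell_nonneg_of_forall_pos D hspos hij hjs.le
  simp only [hj, if_true] at hsplit
  omega

theorem Finset.card_sdiff_union_of_card_eq {α : Type*} [DecidableEq α] {D S T : Finset α}
    (hS : S ⊆ D) (hT : Disjoint D T) (hST : S.card = T.card) : ((D \ S) ∪ T).card = D.card := by
  rw [card_union_of_disjoint (disjoint_of_subset_left sdiff_subset hT), card_sdiff_of_subset hS]
  have := card_le_card hS
  omega

theorem rightPath_targets_distinct_general
    (r : ℕ) (D : Finset ℤ) (hD : D.card = r)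
    (x : Fin r → ℤ) (hx : StrictMono x) (hxD : ∀ z : ℤ, z ∈ D ↔ ∃ i, x i = z)
    (l : ℕ) (idx : Fin l → Fin r) (hidx : StrictMono idx)
    (t : Fin l → ℤ) (ht : ∀ a : Fin l, IsRightMoveTarget r D x (idx a) (t a)) :
    Function.Injective t ∧
    ((D \ Finset.univ.image (fun a => x (idx a))) ∪ Finset.univ.image t).card = r := by
  have hxidx : Function.Injective (fun a => x (idx a)) := hx.injective.comp hidx.injective
  have hmem (a : Fin l) : x (idx a) ∈ D := (hxD _).mpr ⟨idx a, rfl⟩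
  have hinj : Function.Injective t := by
    intro a b hab
    by_contra hne
    rcases lt_or_gt_of_ne (hxidx.ne hne) with h | h
    · exact (ht a).ne_of_lt (ht b) h (hmem b) hab
    · exact (ht b).ne_of_lt (ht a) h (hmem a) hab.symm
  refine ⟨hinj, hD ▸ Finset.card_sdiff_union_of_card_eq ?_ ?_ ?_⟩
  · intro z hz
    obtain ⟨a, -, rfl⟩ := Finset.mem_image.mp hz
    exact hmem a
  · rw [Finset.disjoint_right]
    intro z hz
    obtain ⟨a, -, rfl⟩ := Finset.mem_image.mp hz
    exact (ht a).1
  · rw [Finset.card_image_of_injective _ hxidx, Finset.card_image_of_injective _ hinj]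

/-- For `1 ≤ i₁ < ⋯ < i_l ≤ r` the targets `t₁, …, t_l` of the right moves
`R_{i₁}, …, R_{i_l}` (all computed on the original diagram `D`) are pairwise distinct;
consequently the diagram of the right path `R_θ(D)`, obtained by deleting the ×'s at the
vertices `x_{i₁}, …, x_{i_l}` and placing ×'s at `t₁, …, t_l`, again has exactly `r`
elements. -/
theorem rightPath_targets_distinct
    (r : ℕ) (hr : 1 ≤ r) (D : Finset ℤ) (hD : D.card = r)
    (x : Fin r → ℤ) (hx : StrictMono x) (hxD : ∀ z : ℤ, z ∈ D ↔ ∃ i, x i = z)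
    (l : ℕ) (idx : Fin l → Fin r) (hidx : StrictMono idx)
    (t : Fin l → ℤ) (ht : ∀ a : Fin l, IsRightMoveTarget r D x (idx a) (t a)) :
    Function.Injective t ∧
    ((D \ Finset.univ.image (fun a => x (idx a))) ∪ Finset.univ.image t).card = r :=
  rightPath_targets_distinct_general r D hD x hx hxD l idx hidx t ht
end

section
/- For each 0 ≤ k ≤ r there is exactly one path on D without bridges whose set of moved labels {j_1, …, j_length} equals {1, 2, …, k}; denote it L_{[1,k]}. Moreover, for every 0 ≤ k < r, the path L_{[1,k]} is a subpath of L_{[1,k+1]}. -/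
/-- `s` is a target vertex for the left move `L_{i,j}` on the diagram `D`. -/
def IsLeftMoveTarget (r : ℕ) (D : Finset ℤ) (x : Fin r → ℤ) (i j : Fin r) (s : ℤ) : Prop :=
  i ≤ j ∧ s ∉ D ∧ s < x j ∧ ell D s (x j) = 0 ∧
    crossCount D s (x j) = (j : ℕ) - (i : ℕ)

/-- A path on `D`. -/
def IsPath (r : ℕ) (D : Finset ℤ) (x : Fin r → ℤ) {k : ℕ}
    (iseq jseq : Fin k → Fin r) (sseq : Fin k → ℤ) : Prop :=
  StrictMono jseq ∧
  (∀ a b : Fin k, a < b → iseq b ≤ jseq a → iseq b ≤ iseq a) ∧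
  (∀ b : Fin k, ∀ p : Fin r, iseq b ≤ p → p < jseq b →
      0 ≤ ell D (x p) (x (jseq b)) → ∃ a : Fin k, a < b ∧ jseq a = p) ∧
  (∀ a : Fin k, IsLeftMoveTarget r D x (iseq a) (jseq a) (sseq a)) ∧
  Function.Injective sseq

/-- The path `(L_{i_a,j_a})_{a<k}` has a bridge. -/
def HasBridge (r : ℕ) {k : ℕ} (iseq jseq : Fin k → Fin r) : Prop :=
  ∃ (a : Fin k) (b : Fin r), iseq a ≤ b ∧ b < jseq a ∧ ∀ c : Fin k, jseq c ≠ b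

/-- `P` is a path on `D` without bridges whose set of moved labels is `{1,…,k}`,
i.e. the path `L_{[1,k]}`. -/
def IsL1k (r : ℕ) (D : Finset ℤ) (x : Fin r → ℤ) (k : ℕ)
    (P : (Fin k → Fin r) × (Fin k → Fin r) × (Fin k → ℤ)) : Prop :=
  IsPath r D x P.1 P.2.1 P.2.2 ∧ ¬ HasBridge r P.1 P.2.1 ∧
  Finset.univ.image P.2.1 = Finset.univ.filter (fun i : Fin r => (i : ℕ) < k)

/-!
Every `×` at `t` has a partner: the nearest empty vertex `s < t` with `ℓ(s, t) = 0`, the other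
end of the cap through `t` in the cap diagram. Between the partner and `t` the function `ℓ(·, t)`
stays nonnegative, which forces the caps to be nested: if `u < t` are crosses and the cap of `t`
passes below `u`, it also passes below the cap of `u`. Moreover every admissible target of the
`j`-th cross is the partner of some cross `x_p` with `p ≤ j` (the first cross after the target at
which `ℓ` vanishes). Since the targets of a path are distinct, a path with moved labels
`1, …, k` must send each cross to its partner, by induction on the label; the start label of a
move is then the number of crosses left of its target. Conversely these moves form a path (the
nesting of caps gives condition (2)) without bridges, and they do not depend on `k`.
-/

def vertexSign (D : Finset ℤ) (z : ℤ) : ℤ := if z ∈ D then 1 else -1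

lemma Int.exists_not_and_succ_of_le {P : ℤ → Prop} {m n : ℤ} (hmn : m ≤ n) (hm : ¬P m)
    (hn : P n) : ∃ u, m ≤ u ∧ u < n ∧ ¬P u ∧ P (u + 1) := by
  induction n, hmn using Int.leInduction with
  | base => exact absurd hn hm
  | succ n hmn ih =>
    by_cases h : P n
    · obtain ⟨u, hmu, hun, hu, hu'⟩ := ih h
      exact ⟨u, hmu, by omega, hu, hu'⟩
    · exact ⟨n, hmn, by omega, h, hn⟩

section Diagram

variable (D : Finset ℤ)

lemma vertexSign_of_mem {z : ℤ} (h : z ∈ D) : vertexSign D z = 1 := if_pos h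

lemma vertexSign_of_notMem {z : ℤ} (h : z ∉ D) : vertexSign D z = -1 := if_neg h

lemma ell_eq_sum_vertexSign (s t : ℤ) : ell D s t = ∑ z ∈ Finset.Ioo s t, vertexSign D z := by
  unfold ell crossCount vertexSign
  rw [Finset.sum_ite, Finset.sum_const, Finset.sum_const]
  simp [sub_eq_add_neg]

lemma ell_of_le_add_one {s t : ℤ} (h : t ≤ s + 1) : ell D s t = 0 := by
  have hempty : Finset.Ioo s t = ∅ := by
    ext z
    simp only [Finset.mem_Ioo, Finset.notMem_empty, iff_false]
    omega
  rw [ell_eq_sum_vertexSign, hempty, Finset.sum_empty]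

lemma ell_split {s m t : ℤ} (hsm : s < m) (hmt : m < t) :
    ell D s t = ell D s m + vertexSign D m + ell D m t := by
  have hunion : Finset.Ioo s t = Finset.Ioo s m ∪ Finset.Ico m t := by
    ext z
    simp only [Finset.mem_Ioo, Finset.mem_union, Finset.mem_Ico]
    omega
  have hdisj : Disjoint (Finset.Ioo s m) (Finset.Ico m t) := by
    simp only [Finset.disjoint_left, Finset.mem_Ioo, Finset.mem_Ico]
    omega
  simp only [ell_eq_sum_vertexSign, hunion, Finset.sum_union hdisj,
    ← Finset.add_sum_Ioo_eq_sum_Ico hmt, add_assoc]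

lemma ell_eq_vertexSign_add {s t : ℤ} (h : s + 1 < t) :
    ell D s t = vertexSign D (s + 1) + ell D (s + 1) t := by
  rw [ell_split D (lt_add_one s) h, ell_of_le_add_one D le_rfl, zero_add]

lemma ell_add_one_eq_add_vertexSign {s u : ℤ} (h : s < u) :
    ell D s (u + 1) = ell D s u + vertexSign D u := by
  rw [ell_split D h (lt_add_one u), ell_of_le_add_one D le_rfl, add_zero]

lemma ell_eq_two_mul_crossCount_sub {s t : ℤ} (h : s < t) :
    ell D s t = 2 * (crossCount D s t : ℤ) - (t - s - 1) := by
  have hsplit := Finset.card_filter_add_card_filter_not (s := Finset.Ioo s t)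
    (p := fun z => z ∈ D)
  have hcard : ((Finset.Ioo s t).card : ℤ) = t - s - 1 := by rw [Int.card_Ioo]; omega
  unfold ell crossCount
  omega

lemma crossCount_le_card (s t : ℤ) : crossCount D s t ≤ D.card :=
  Finset.card_le_card fun _ hz => (Finset.mem_filter.mp hz).2

def IsTarget (s t : ℤ) : Prop := s ∉ D ∧ s < t ∧ ell D s t = 0

lemma exists_isTarget_of_ell_neg {s t : ℤ} (hst : s < t) (hneg : ell D s t < 0) :
    ∃ u, s < u ∧ IsTarget D u t := by
  obtain ⟨u, hsu, hut, hu, hu'⟩ := Int.exists_not_and_succ_of_le (P := fun u => 0 ≤ ell D u t)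
    (show s ≤ t - 1 by omega) (by simpa using hneg)
    (show 0 ≤ ell D (t - 1) t by rw [ell_of_le_add_one D (by omega)])
  simp only [not_le] at hu hu'
  have hstep := ell_eq_vertexSign_add D (show u + 1 < t by omega)
  by_cases hmem : u + 1 ∈ D
  · rw [vertexSign_of_mem D hmem] at hstep
    omega
  · rw [vertexSign_of_notMem D hmem] at hstep
    exact ⟨u + 1, by omega, hmem, by omega, by omega⟩

lemma exists_isTarget (t : ℤ) : ∃ s, IsTarget D s t := by
  have hst : t - 2 * D.card - 2 < t := by omega
  have hell := ell_eq_two_mul_crossCount_sub D hst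
  have hcross := crossCount_le_card D (t - 2 * D.card - 2) t
  obtain ⟨u, -, hu⟩ := exists_isTarget_of_ell_neg D hst (by omega)
  exact ⟨u, hu⟩

lemma exists_greatest_isTarget (t : ℤ) :
    ∃ s, IsTarget D s t ∧ ∀ s', IsTarget D s' t → s' ≤ s :=
  Int.exists_greatest_of_bdd ⟨t, fun _ h => h.2.1.le⟩ (exists_isTarget D t)

noncomputable def partner (t : ℤ) : ℤ := (exists_greatest_isTarget D t).choose

lemma partner_isTarget (t : ℤ) : IsTarget D (partner D t) t :=
  (exists_greatest_isTarget D t).choose_spec.1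

lemma le_partner {s t : ℤ} (h : IsTarget D s t) : s ≤ partner D t :=
  (exists_greatest_isTarget D t).choose_spec.2 s h

lemma ell_nonneg_of_partner_le {s t : ℤ} (hs : partner D t ≤ s) (hst : s < t) :
    0 ≤ ell D s t := by
  by_contra hneg
  obtain ⟨u, hsu, hu⟩ := exists_isTarget_of_ell_neg D hst (not_le.mp hneg)
  have := le_partner D hu
  omega

lemma partner_lt_partner {u t : ℤ} (hu : u ∈ D) (hut : u < t) (h : partner D t < u) :
    partner D t < partner D u := by
  by_contra! hle
  have hleft := ell_nonneg_of_partner_le D hle h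
  have hright := ell_nonneg_of_partner_le D h.le hut
  have hsplit := ell_split D h hut
  rw [(partner_isTarget D t).2.2, vertexSign_of_mem D hu] at hsplit
  omega

lemma partner_injOn : Set.InjOn (partner D) D := by
  have key : ∀ u ∈ D, ∀ t, u < t → partner D u ≠ partner D t := fun u hu t hut heq =>
    (partner_lt_partner D hu hut (heq ▸ (partner_isTarget D u).2.1)).ne heq.symm
  intro u hu t ht heq
  rcases lt_trichotomy u t with h | h | h
  · exact absurd heq (key u hu t h)
  · exact h
  · exact absurd heq.symm (key t ht u h)

lemma exists_partner_eq {s t : ℤ} (ht : t ∈ D) (hs : IsTarget D s t) :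
    ∃ u ∈ D, u ≤ t ∧ partner D u = s := by
  classical
  set S := D.filter (IsTarget D s)
  have htS : t ∈ S := Finset.mem_filter.mpr ⟨ht, hs⟩
  obtain ⟨huD, hsu⟩ := Finset.mem_filter.mp (S.min'_mem ⟨t, htS⟩)
  set u := S.min' ⟨t, htS⟩
  refine ⟨u, huD, S.min'_le t htS, ?_⟩
  obtain ⟨hσD, hσu, hσ⟩ := partner_isTarget D u
  refine ((le_partner D hsu).lt_or_eq.resolve_left fun hsσ => ?_).symm
  -- `ℓ(s, ·)` climbs from `0` to `1` on `(s, partner u]`; where it does, there is a cross `v < u`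
  -- with `ℓ(s, v) = 0`, against the minimality of `u`.
  have hsplit := ell_split D hsσ hσu
  rw [hsu.2.2, hσ, vertexSign_of_notMem D hσD] at hsplit
  obtain ⟨v, hsv, hvσ, hv, hv'⟩ := Int.exists_not_and_succ_of_le (P := fun v => 0 < ell D s v)
    (show s + 1 ≤ partner D u by omega) (by simp [ell_of_le_add_one D le_rfl])
    (show 0 < ell D s (partner D u) by omega)
  simp only [not_lt] at hv hv'
  have hstep := ell_add_one_eq_add_vertexSign D (show s < v by omega)
  have hvD : v ∈ D := by
    by_contra hvD
    rw [vertexSign_of_notMem D hvD] at hstep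
    omega
  rw [vertexSign_of_mem D hvD] at hstep
  have hvS : v ∈ S := Finset.mem_filter.mpr ⟨hvD, hs.1, by omega, by omega⟩
  have := S.min'_le v hvS
  omega

def countBelow (s : ℤ) : ℕ := (D.filter (· < s)).card

lemma countBelow_mono : Monotone (countBelow D) := fun _ _ h =>
  Finset.card_le_card (Finset.monotone_filter_right D fun _ _ hz => lt_of_lt_of_le hz h)

lemma countBelow_lt_countBelow {u s : ℤ} (hu : u ∈ D) (h : u < s) :
    countBelow D u < countBelow D s :=
  Finset.card_lt_card ⟨Finset.monotone_filter_right D fun _ _ hz => hz.trans h,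
    fun hsub => lt_irrefl u (Finset.mem_filter.mp (hsub (Finset.mem_filter.mpr ⟨hu, h⟩))).2⟩

lemma crossCount_add_countBelow {s t : ℤ} (hs : s ∉ D) (hst : s < t) :
    crossCount D s t + countBelow D s = countBelow D t := by
  have hunion : D.filter (· < t) = (Finset.Ioo s t).filter (· ∈ D) ∪ D.filter (· < s) := by
    ext z
    simp only [Finset.mem_filter, Finset.mem_union, Finset.mem_Ioo]
    constructor
    · rintro ⟨hz, hzt⟩
      rcases lt_trichotomy z s with h | rfl | h
      exacts [Or.inr ⟨hz, h⟩, absurd hz hs, Or.inl ⟨⟨h, hzt⟩, hz⟩]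
    · rintro (⟨⟨-, hzt⟩, hz⟩ | ⟨hz, hzs⟩)
      exacts [⟨hz, hzt⟩, ⟨hz, hzs.trans hst⟩]
  have hdisj : Disjoint ((Finset.Ioo s t).filter (· ∈ D)) (D.filter (· < s)) := by
    simp only [Finset.disjoint_left, Finset.mem_filter, Finset.mem_Ioo]
    intro z hz hz'
    exact lt_asymm hz.1.1 hz'.2
  rw [countBelow, countBelow, hunion, Finset.card_union_of_disjoint hdisj, crossCount]

end Diagram

lemma image_castLE {k r : ℕ} (hk : k ≤ r) :
    Finset.univ.image (Fin.castLE hk) = Finset.univ.filter (fun i : Fin r => (i : ℕ) < k) := by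
  ext i
  simp only [Finset.mem_image, Finset.mem_univ, true_and, Finset.mem_filter]
  exact ⟨fun ⟨a, ha⟩ => ha ▸ a.isLt, fun hi => ⟨⟨i, hi⟩, rfl⟩⟩

lemma eq_castLE_of_strictMono {k r : ℕ} (hk : k ≤ r) {f : Fin k → Fin r} (hf : StrictMono f)
    (himage : Finset.univ.image f = Finset.univ.filter (fun i : Fin r => (i : ℕ) < k)) :
    f = Fin.castLE hk := by
  have hcard : (Finset.univ.filter (fun i : Fin r => (i : ℕ) < k)).card = k := by
    rw [← image_castLE hk, Finset.card_image_of_injective _ (Fin.castLE_injective hk),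
      Finset.card_univ, Fintype.card_fin]
  rw [Finset.orderEmbOfFin_unique hcard
    (fun a => himage ▸ Finset.mem_image_of_mem f (Finset.mem_univ a)) hf]
  exact (Finset.orderEmbOfFin_unique hcard
    (fun a => image_castLE hk ▸ Finset.mem_image_of_mem _ (Finset.mem_univ a))
    (Fin.strictMono_castLE hk)).symm

section Enumeration

variable {r : ℕ} (D : Finset ℤ) {x : Fin r → ℤ}

lemma countBelow_apply (hx : StrictMono x) (hxD : ∀ z : ℤ, z ∈ D ↔ ∃ i, x i = z) (j : Fin r) :
    countBelow D (x j) = j := by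
  have himage : D.filter (· < x j) = (Finset.Iio j).image x := by
    ext z
    simp only [Finset.mem_filter, Finset.mem_image, Finset.mem_Iio, hxD]
    constructor
    · rintro ⟨⟨p, rfl⟩, hp⟩
      exact ⟨p, hx.lt_iff_lt.mp hp, rfl⟩
    · rintro ⟨p, hp, rfl⟩
      exact ⟨⟨p, rfl⟩, hx hp⟩
  rw [countBelow, himage, Finset.card_image_of_injective _ hx.injective, Fin.card_Iio]

lemma IsLeftMoveTarget.val_eq_countBelow (hx : StrictMono x)
    (hxD : ∀ z : ℤ, z ∈ D ↔ ∃ i, x i = z) {i j : Fin r} {s : ℤ}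
    (h : IsLeftMoveTarget r D x i j s) : (i : ℕ) = countBelow D s := by
  obtain ⟨hij, hsD, hsx, -, hcross⟩ := h
  have := crossCount_add_countBelow D hsD hsx
  rw [countBelow_apply D hx hxD, hcross] at this
  have : (i : ℕ) ≤ j := hij
  omega

lemma IsLeftMoveTarget.isTarget {i j : Fin r} {s : ℤ} (h : IsLeftMoveTarget r D x i j s) :
    IsTarget D s (x j) :=
  ⟨h.2.1, h.2.2.1, h.2.2.2.1⟩

lemma eq_partner_of_injective (hx : StrictMono x) (hxD : ∀ z : ℤ, z ∈ D ↔ ∃ i, x i = z)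
    {k : ℕ} (hk : k ≤ r) {s : Fin k → ℤ}
    (hs : Function.Injective s) (htarget : ∀ a, IsTarget D (s a) (x (Fin.castLE hk a)))
    (a : Fin k) : s a = partner D (x (Fin.castLE hk a)) := by
  induction a using WellFoundedLT.induction with
  | _ a ih =>
  obtain ⟨u, hu, hua, hpu⟩ := exists_partner_eq D ((hxD _).2 ⟨_, rfl⟩) (htarget a)
  obtain ⟨p, rfl⟩ := (hxD u).1 hu
  rcases (hx.le_iff_le.mp hua).lt_or_eq with hlt | rfl
  · have hb : (⟨p, (show (p : ℕ) < a from hlt).trans a.isLt⟩ : Fin k) < a := hlt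
    exact absurd (hs ((ih _ hb).trans hpu).symm) hb.ne'
  · exact hpu.symm

noncomputable def startIndex (hx : StrictMono x) (hxD : ∀ z : ℤ, z ∈ D ↔ ∃ i, x i = z)
    (j : Fin r) : Fin r :=
  ⟨countBelow D (partner D (x j)), by
    have := countBelow_mono D (partner_isTarget D (x j)).2.1.le
    rw [countBelow_apply D hx hxD] at this
    exact this.trans_lt j.isLt⟩

variable (hx : StrictMono x) (hxD : ∀ z : ℤ, z ∈ D ↔ ∃ i, x i = z)

lemma isLeftMoveTarget_partner (j : Fin r) :
    IsLeftMoveTarget r D x (startIndex D hx hxD j) j (partner D (x j)) := by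
  obtain ⟨hσD, hσx, hσ⟩ := partner_isTarget D (x j)
  have hcount := crossCount_add_countBelow D hσD hσx
  rw [countBelow_apply D hx hxD] at hcount
  refine ⟨?_, hσD, hσx, hσ, ?_⟩
  · change countBelow D _ ≤ (j : ℕ)
    omega
  · change _ = (j : ℕ) - countBelow D _
    omega

lemma startIndex_le_startIndex {a b : Fin r} (hab : a < b)
    (h : startIndex D hx hxD b ≤ a) : startIndex D hx hxD b ≤ startIndex D hx hxD a := by
  have hxa := (hxD (x a)).2 ⟨a, rfl⟩
  have hσb : partner D (x b) < x a := by
    by_contra! hle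
    have hne : x a ≠ partner D (x b) := fun heq => (partner_isTarget D (x b)).1 (heq ▸ hxa)
    have := countBelow_lt_countBelow D hxa (lt_of_le_of_ne hle hne)
    rw [countBelow_apply D hx hxD] at this
    exact absurd h (not_le.mpr this)
  exact countBelow_mono D (partner_lt_partner D hxa (hx hab) hσb).le

noncomputable def canonicalPath {k : ℕ} (hk : k ≤ r) :
    (Fin k → Fin r) × (Fin k → Fin r) × (Fin k → ℤ) :=
  (fun a => startIndex D hx hxD (Fin.castLE hk a), Fin.castLE hk,
    fun a => partner D (x (Fin.castLE hk a)))

lemma isL1k_canonicalPath {k : ℕ} (hk : k ≤ r) :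
    IsL1k r D x k (canonicalPath D hx hxD hk) := by
  refine ⟨⟨Fin.strictMono_castLE hk, fun a b hab h => startIndex_le_startIndex D hx hxD hab h,
    fun b p _ hpb _ => ⟨⟨p, (show (p : ℕ) < b from hpb).trans b.isLt⟩, hpb, rfl⟩,
    fun a => isLeftMoveTarget_partner D hx hxD _, fun a b h => ?_⟩, ?_, image_castLE hk⟩
  · exact Fin.castLE_injective hk (hx.injective (partner_injOn D
      ((hxD _).2 ⟨_, rfl⟩) ((hxD _).2 ⟨_, rfl⟩) h))
  · rintro ⟨a, b, -, hba, hb⟩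
    exact hb ⟨b, (show (b : ℕ) < a from hba).trans a.isLt⟩ rfl

lemma eq_canonicalPath_of_isL1k {k : ℕ} (hk : k ≤ r)
    {P : (Fin k → Fin r) × (Fin k → Fin r) × (Fin k → ℤ)} (hP : IsL1k r D x k P) :
    P = canonicalPath D hx hxD hk := by
  obtain ⟨iseq, jseq, sseq⟩ := P
  obtain ⟨⟨hmono, -, -, hmove, hinj⟩, -, himage⟩ := hP
  obtain rfl := eq_castLE_of_strictMono hk hmono himage
  have hs : sseq = fun a => partner D (x (Fin.castLE hk a)) :=
    funext (eq_partner_of_injective D hx hxD hk hinj fun a => (hmove a).isTarget D)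
  subst hs
  have hi : iseq = fun a => startIndex D hx hxD (Fin.castLE hk a) :=
    funext fun a => Fin.ext ((hmove a).val_eq_countBelow D hx hxD)
  rw [hi]
  rfl

end Enumeration

theorem L1k_existsUnique_and_subpath_general
    (r : ℕ) (D : Finset ℤ)
    (x : Fin r → ℤ) (hx : StrictMono x) (hxD : ∀ z : ℤ, z ∈ D ↔ ∃ i, x i = z) :
    (∀ k : ℕ, k ≤ r →
      ∃! P : (Fin k → Fin r) × (Fin k → Fin r) × (Fin k → ℤ), IsL1k r D x k P) ∧
    (∀ k : ℕ, k < r →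
      ∀ (P : (Fin k → Fin r) × (Fin k → Fin r) × (Fin k → ℤ))
        (Q : (Fin (k + 1) → Fin r) × (Fin (k + 1) → Fin r) × (Fin (k + 1) → ℤ)),
        IsL1k r D x k P → IsL1k r D x (k + 1) Q →
        ∀ a : Fin k, Q.1 a.castSucc = P.1 a ∧ Q.2.1 a.castSucc = P.2.1 a ∧
          Q.2.2 a.castSucc = P.2.2 a) := by
  refine ⟨fun k hk => ⟨canonicalPath D hx hxD hk, isL1k_canonicalPath D hx hxD hk,
    fun P hP => eq_canonicalPath_of_isL1k D hx hxD hk hP⟩, ?_⟩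
  intro k hk P Q hP hQ a
  rw [eq_canonicalPath_of_isL1k D hx hxD hk.le hP, eq_canonicalPath_of_isL1k D hx hxD hk hQ]
  exact ⟨rfl, rfl, rfl⟩

/-- For each `0 ≤ k ≤ r` there is exactly one path `L_{[1,k]}` on `D` without bridges
whose set of moved labels is `{1,…,k}`; moreover for `k < r` the path `L_{[1,k]}` is a
subpath of `L_{[1,k+1]}` (via the initial-segment embedding, with the same moves and
targets). -/
theorem L1k_existsUnique_and_subpath
    (r : ℕ) (hr : 1 ≤ r) (D : Finset ℤ) (hD : D.card = r)
    (x : Fin r → ℤ) (hx : StrictMono x) (hxD : ∀ z : ℤ, z ∈ D ↔ ∃ i, x i = z) :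
    (∀ k : ℕ, k ≤ r →
      ∃! P : (Fin k → Fin r) × (Fin k → Fin r) × (Fin k → ℤ), IsL1k r D x k P) ∧
    (∀ k : ℕ, k < r →
      ∀ (P : (Fin k → Fin r) × (Fin k → Fin r) × (Fin k → ℤ))
        (Q : (Fin (k + 1) → Fin r) × (Fin (k + 1) → Fin r) × (Fin (k + 1) → ℤ)),
        IsL1k r D x k P → IsL1k r D x (k + 1) Q →
        ∀ a : Fin k, Q.1 a.castSucc = P.1 a ∧ Q.2.1 a.castSucc = P.2.1 a ∧
          Q.2.2 a.castSucc = P.2.2 a) :=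
  L1k_existsUnique_and_subpath_general r D x hx hxD
end
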